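/- arXiv:0708.3177 — 2 statements merged into one kernel-verified Lean document; each statement's English description precedes it below -/
import Mathlib

section
/- Let (A(t))_{t∈ℕ} be a sequence of n×n nonnegative real matrices with strictly positive diagonals, and let 0 < t_0 < t_1 < ⋯ be a strictly increasing sequence such that all backward accumulations B_i := A(t_{i+1},t_i) have the same type as B_0 and, moreover, no further increase of positivity is possible: for every i and all indices k,l, (B_{i+1}·B_i)_{kl} > 0 ⟺ (B_0)_{kl} > 0. Then: (1) for any two indices k, l that communicate in B_0 (i.e., there is a path k → l and a path l → k in B_0), the entry (B_i)_{kl} is positive for every i; and (2) for any two communication classes I, J of B_0, the block of B_i with rows in J and columns in I is either entirely positive or entirely zero, uniformly in i. -/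
/-- Backward accumulation `A(t,s) = A(t-1) ⬝ A(t-2) ⋯ A(s)` (identity for `s = t`). -/
def backAcc {n : ℕ} (A : ℕ → Matrix (Fin n) (Fin n) ℝ) (s t : ℕ) :
    Matrix (Fin n) (Fin n) ℝ :=
  (((List.range' s (t - s)).map A).reverse).prod

/-- There is a path `i → j` in the nonnegative matrix `B`:
a finite sequence of indices starting at `i` and ending at `j` along which the
corresponding entries of `B` are positive. -/
def PathTo {n : ℕ} (B : Matrix (Fin n) (Fin n) ℝ) (i j : Fin n) : Prop :=
  Relation.ReflTransGen (fun k l => 0 < B k l) i j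

/-- Indices `i` and `j` communicate in `B`: there is a path `i → j` and a path `j → i`. -/
def Communicates {n : ℕ} (B : Matrix (Fin n) (Fin n) ℝ) (i j : Fin n) : Prop :=
  PathTo B i j ∧ PathTo B j i

/-!
Every accumulation `B i` is a product of nonnegative matrices with positive diagonal, so it is
one itself. Since `B 1` has the type of `B 0`, the entry `(B 1 * B 0) k l` is positive as soon as
`(B 0) k m` and `(B 0) m l` are, and maximality says that this forces `(B 0) k l > 0`. Thus the
positivity relation of `B 0` is reflexive and transitive, so a path `k → l` in `B 0` is already a
positive entry. Consequently positivity of `(B 0) k l` only depends on the communication classes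
of `k` and `l`, and all `B i` share the type of `B 0`.
-/

namespace Matrix

variable {ι R : Type*} [Fintype ι] [Semiring R] [PartialOrder R] [IsStrictOrderedRing R]

theorem mul_apply_pos_of_nonneg {M N : Matrix ι ι R} (hM : ∀ i j, 0 ≤ M i j)
    (hN : ∀ i j, 0 ≤ N i j) {k m l : ι} (hkm : 0 < M k m) (hml : 0 < N m l) :
    0 < (M * N) k l :=
  Finset.sum_pos' (fun j _ => mul_nonneg (hM k j) (hN j l))
    ⟨m, Finset.mem_univ m, mul_pos hkm hml⟩

variable (ι R) [DecidableEq ι]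

def nonnegPosDiag : Submonoid (Matrix ι ι R) where
  carrier := {M | (∀ i j, 0 ≤ M i j) ∧ ∀ i, 0 < M i i}
  one_mem' := ⟨fun i j => by by_cases h : i = j <;> simp [one_apply, h], fun i => by simp⟩
  mul_mem' := fun {M N} ⟨hM, hMd⟩ ⟨hN, hNd⟩ =>
    ⟨fun i j => Finset.sum_nonneg fun k _ => mul_nonneg (hM i k) (hN k j),
      fun i => mul_apply_pos_of_nonneg hM hN (hMd i) (hNd i)⟩

variable {ι R} in
theorem mem_nonnegPosDiag {M : Matrix ι ι R} :
    M ∈ nonnegPosDiag ι R ↔ (∀ i j, 0 ≤ M i j) ∧ ∀ i, 0 < M i i :=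
  Iff.rfl

end Matrix

theorem backAcc_mem {n : ℕ} (S : Submonoid (Matrix (Fin n) (Fin n) ℝ))
    (A : ℕ → Matrix (Fin n) (Fin n) ℝ) (hA : ∀ t, A t ∈ S) (s t : ℕ) : backAcc A s t ∈ S :=
  S.list_prod_mem fun M hM => by
    obtain ⟨r, -, rfl⟩ := List.mem_map.mp (List.mem_reverse.mp hM)
    exact hA r

section PositivityPreorder

variable {n : ℕ} {N : Matrix (Fin n) (Fin n) ℝ}
  (hdiag : ∀ k, 0 < N k k) (htrans : ∀ k m l, 0 < N k m → 0 < N m l → 0 < N k l)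
include hdiag htrans

theorem PathTo.pos {k l : Fin n} (h : PathTo N k l) : 0 < N k l := by
  induction h with
  | refl => exact hdiag k
  | tail _ hml ih => exact htrans _ _ _ ih hml

theorem pos_iff_of_communicates {k₀ l₀ k l : Fin n} (hk : Communicates N k₀ k)
    (hl : Communicates N l₀ l) : 0 < N k l ↔ 0 < N k₀ l₀ := by
  have pos {k l : Fin n} (h : PathTo N k l) : 0 < N k l := h.pos hdiag htrans
  exact ⟨fun h => htrans _ _ _ (pos hk.1) (htrans _ _ _ h (pos hl.2)),
    fun h => htrans _ _ _ (pos hk.2) (htrans _ _ _ h (pos hl.1))⟩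

end PositivityPreorder

theorem stmt2_general {n : ℕ} (A : ℕ → Matrix (Fin n) (Fin n) ℝ)
    (hnonneg : ∀ t i j, 0 ≤ A t i j) (hdiag : ∀ t i, 0 < A t i i)
    (t : ℕ → ℕ)
    (B : ℕ → Matrix (Fin n) (Fin n) ℝ)
    (hB : ∀ i, B i = backAcc A (t i) (t (i + 1)))
    (htype : ∀ i, ∀ k l : Fin n, 0 < B i k l ↔ 0 < B 0 k l)
    (hmax : ∀ i, ∀ k l : Fin n, 0 < (B (i + 1) * B i) k l ↔ 0 < B 0 k l) :
    (∀ k l : Fin n, Communicates (B 0) k l → ∀ i, 0 < B i k l) ∧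
    (∀ k₀ l₀ : Fin n,
      (∀ i, ∀ k l : Fin n, Communicates (B 0) k₀ k → Communicates (B 0) l₀ l →
        0 < B i k l) ∨
      (∀ i, ∀ k l : Fin n, Communicates (B 0) k₀ k → Communicates (B 0) l₀ l →
        B i k l = 0)) := by
  have hBmem (i : ℕ) : (∀ k l, 0 ≤ B i k l) ∧ ∀ k, 0 < B i k k :=
    Matrix.mem_nonnegPosDiag.mp <| hB i ▸
      backAcc_mem _ A (fun s => Matrix.mem_nonnegPosDiag.mpr ⟨hnonneg s, hdiag s⟩) _ _
  have htrans (k m l : Fin n) (hkm : 0 < B 0 k m) (hml : 0 < B 0 m l) : 0 < B 0 k l :=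
    (hmax 0 k l).mp <| Matrix.mul_apply_pos_of_nonneg (hBmem 1).1 (hBmem 0).1
      ((htype 1 k m).mpr hkm) hml
  refine ⟨fun k l hkl i => (htype i k l).mpr (hkl.1.pos (hBmem 0).2 htrans), fun k₀ l₀ => ?_⟩
  by_cases h : 0 < B 0 k₀ l₀
  · exact .inl fun i k l hk hl =>
      (htype i k l).mpr ((pos_iff_of_communicates (hBmem 0).2 htrans hk hl).mpr h)
  · refine .inr fun i k l hk hl => le_antisymm (not_lt.mp fun hpos => h ?_) ((hBmem i).1 k l)
    exact (pos_iff_of_communicates (hBmem 0).2 htrans hk hl).mp ((htype i k l).mp hpos)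

/-- If all accumulations `B i := A(t (i+1), t i)` have the same type as `B 0` and no
further increase of positivity is possible (multiplying two consecutive accumulations
does not create new positive entries), then (1) entries corresponding to communicating
pairs of indices of `B 0` are positive in every `B i`, and (2) for any two communication
classes `I` (the class of `l₀`) and `J` (the class of `k₀`) of `B 0`, the `(J, I)`-block
of `B i` is entirely positive or entirely zero, uniformly in `i`. -/
theorem stmt2 {n : ℕ} (A : ℕ → Matrix (Fin n) (Fin n) ℝ)
    (hnonneg : ∀ t i j, 0 ≤ A t i j) (hdiag : ∀ t i, 0 < A t i i)
    (t : ℕ → ℕ) (ht : StrictMono t) (ht0 : 0 < t 0)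
    (B : ℕ → Matrix (Fin n) (Fin n) ℝ)
    (hB : ∀ i, B i = backAcc A (t i) (t (i + 1)))
    (htype : ∀ i, ∀ k l : Fin n, 0 < B i k l ↔ 0 < B 0 k l)
    (hmax : ∀ i, ∀ k l : Fin n, 0 < (B (i + 1) * B i) k l ↔ 0 < B 0 k l) :
    (∀ k l : Fin n, Communicates (B 0) k l → ∀ i, 0 < B i k l) ∧
    (∀ k₀ l₀ : Fin n,
      (∀ i, ∀ k l : Fin n, Communicates (B 0) k₀ k → Communicates (B 0) l₀ l →
        0 < B i k l) ∨
      (∀ i, ∀ k l : Fin n, Communicates (B 0) k₀ k → Communicates (B 0) l₀ l →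
        B i k l = 0)) :=
  stmt2_general A hnonneg hdiag t B hB htype hmax
end

section
/- Let (A_i)_{i∈ℕ} be a sequence of n×n row-stochastic matrices and (δ_i)_{i∈ℕ} real numbers with 0 ≤ δ_i ≤ 1, τ(A_i) ≤ 1 − δ_i for all i, and ∑_{i=0}^∞ δ_i = ∞. Then the coefficients of ergodicity of the backward products converge to zero: lim_{i→∞} τ(A_i ⋯ A_1 A_0) = 0. -/
/-!
For a matrix with unit row sums, `2 ∑ₖ min (xₖ, yₖ) = ∑ x + ∑ y - ‖x - y‖₁` turns `τ(A)` into
`½ maxᵢⱼ ‖Aᵢ - Aⱼ‖₁`. If `∑ v = 0` and `s` is the sign vector of `vB`, then `‖vB‖₁ = v ⬝ (B s)`,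
and since `∑ v = 0` the vector `B s` may be shifted into an interval centred at `0` of length at
most `2 τ(B)`; hence `‖vB‖₁ ≤ τ(B) ‖v‖₁`. Taking `v = Aᵢ - Aⱼ` gives `τ(AB) ≤ τ(A) τ(B)`, so the
backward products satisfy `τ ≤ ∏ (1 - δₜ) ≤ exp (-∑ δₜ) → 0`.
-/

open Filter Topology Finset
open scoped Matrix

/-- Coefficient of ergodicity of a row-stochastic matrix:
`τ(A) = 1 - min_{i,j} ∑ₖ min (A i k) (A j k)`. -/
noncomputable def ergCoeff {n : ℕ} (A : Matrix (Fin n) (Fin n) ℝ) : ℝ :=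
  1 - sInf {x : ℝ | ∃ i j : Fin n, x = ∑ k, min (A i k) (A j k)}

lemma abs_sign_le_one {α : Type*} [Ring α] [LinearOrder α] [IsStrictOrderedRing α] (x : α) :
    |(SignType.sign x : α)| ≤ 1 := by
  rcases lt_trichotomy x 0 with h | h | h <;> simp [h]

lemma two_mul_sum_min {ι : Type*} [Fintype ι] (x y : ι → ℝ) :
    2 * ∑ k, min (x k) (y k) = ∑ k, x k + ∑ k, y k - ∑ k, |x k - y k| := by
  simp only [mul_sum, ← sum_add_distrib, ← sum_sub_distrib]
  refine sum_congr rfl fun k _ => ?_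
  linarith [min_add_max (x k) (y k), max_sub_min_eq_abs' (x k) (y k)]

lemma dotProduct_le_of_sum_eq_zero {ι : Type*} [Fintype ι] [Nonempty ι] {v c : ι → ℝ}
    (hv : ∑ i, v i = 0) {D : ℝ} (hc : ∀ i j, c i - c j ≤ D) :
    v ⬝ᵥ c ≤ D / 2 * ∑ i, |v i| := by
  obtain ⟨i₀, hi₀⟩ := Finite.exists_max c
  obtain ⟨j₀, hj₀⟩ := Finite.exists_min c
  set m := (c i₀ + c j₀) / 2 with hm
  have hshift : v ⬝ᵥ c = ∑ i, v i * (c i - m) := by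
    simp only [dotProduct, mul_sub, sum_sub_distrib, ← sum_mul, hv, zero_mul, sub_zero]
  rw [hshift, mul_sum]
  refine sum_le_sum fun i _ => ?_
  have hcentre : |c i - m| ≤ D / 2 := by
    have := hc i₀ j₀
    exact abs_sub_le_iff.2 ⟨by linarith [hi₀ i], by linarith [hj₀ i]⟩
  calc v i * (c i - m) ≤ |v i| * |c i - m| := by rw [← abs_mul]; exact le_abs_self _
    _ ≤ |v i| * (D / 2) := by gcongr
    _ = D / 2 * |v i| := mul_comm _ _

lemma sum_abs_vecMul_le {ι κ : Type*} [Fintype ι] [Nonempty ι] [Fintype κ] {B : Matrix ι κ ℝ}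
    {D : ℝ} (hB : ∀ i j, ∑ k, |B i k - B j k| ≤ D) {v : ι → ℝ} (hv : ∑ i, v i = 0) :
    ∑ k, |(v ᵥ* B) k| ≤ D / 2 * ∑ i, |v i| := by
  set s : κ → ℝ := fun k => SignType.sign ((v ᵥ* B) k)
  have hnorm : ∑ k, |(v ᵥ* B) k| = v ⬝ᵥ (B *ᵥ s) := by
    rw [Matrix.dotProduct_mulVec]
    exact sum_congr rfl fun k _ => (self_mul_sign _).symm
  rw [hnorm]
  refine dotProduct_le_of_sum_eq_zero hv fun i j => ?_
  calc (B *ᵥ s) i - (B *ᵥ s) j = ∑ k, (B i k - B j k) * s k := by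
        simp only [Matrix.mulVec, dotProduct, sub_mul, sum_sub_distrib]
    _ ≤ ∑ k, |B i k - B j k| := sum_le_sum fun k _ =>
        (le_abs_self _).trans <| by
          rw [abs_mul]; exact mul_le_of_le_one_right (abs_nonneg _) (abs_sign_le_one _)
    _ ≤ D := hB i j

section ergCoeff

variable {n : ℕ} {A B : Matrix (Fin n) (Fin n) ℝ}

lemma bddBelow_sum_min_rows (A : Matrix (Fin n) (Fin n) ℝ) :
    BddBelow {x : ℝ | ∃ i j : Fin n, x = ∑ k, min (A i k) (A j k)} :=
  ((Set.finite_range fun p : Fin n × Fin n => ∑ k, min (A p.1 k) (A p.2 k)).subset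
    (by rintro x ⟨i, j, rfl⟩; exact ⟨(i, j), rfl⟩)).bddBelow

lemma sum_abs_sub_le_two_mul_ergCoeff (hA : ∀ i, ∑ j, A i j = 1) (i j : Fin n) :
    ∑ k, |A i k - A j k| ≤ 2 * ergCoeff A := by
  have hmin := csInf_le (bddBelow_sum_min_rows A) ⟨i, j, rfl⟩
  have := two_mul_sum_min (A i) (A j)
  rw [hA i, hA j] at this
  rw [ergCoeff]
  linarith

lemma ergCoeff_le_of_sum_abs_sub_le [Nonempty (Fin n)] (hA : ∀ i, ∑ j, A i j = 1) {c : ℝ}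
    (h : ∀ i j, ∑ k, |A i k - A j k| ≤ 2 * c) : ergCoeff A ≤ c := by
  have hne : {x : ℝ | ∃ i j : Fin n, x = ∑ k, min (A i k) (A j k)}.Nonempty :=
    ⟨_, Classical.arbitrary _, Classical.arbitrary _, rfl⟩
  have hinf : 1 - c ≤ sInf {x : ℝ | ∃ i j : Fin n, x = ∑ k, min (A i k) (A j k)} := by
    refine le_csInf hne ?_
    rintro x ⟨i, j, rfl⟩
    have := two_mul_sum_min (A i) (A j)
    rw [hA i, hA j] at this
    linarith [h i j]
  rw [ergCoeff]
  linarith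

lemma ergCoeff_nonneg [Nonempty (Fin n)] (hA : ∀ i, ∑ j, A i j = 1) : 0 ≤ ergCoeff A := by
  have := sum_abs_sub_le_two_mul_ergCoeff hA (Classical.arbitrary _) (Classical.arbitrary _)
  simp only [sub_self, abs_zero, sum_const_zero] at this
  linarith

lemma ergCoeff_le_one (hA : ∀ i j, 0 ≤ A i j) : ergCoeff A ≤ 1 :=
  sub_le_self _ <| Real.sInf_nonneg <| by
    rintro x ⟨i, j, rfl⟩
    exact sum_nonneg fun k _ => le_min (hA i k) (hA j k)

lemma sum_mul_apply_eq_one (hA : ∀ i, ∑ j, A i j = 1) (hB : ∀ i, ∑ j, B i j = 1) (i : Fin n) :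
    ∑ j, (A * B) i j = 1 := by
  simp only [Matrix.mul_apply]
  rw [sum_comm]
  simp only [← mul_sum, hB, mul_one, hA]

lemma ergCoeff_mul_le [Nonempty (Fin n)] (hA : ∀ i, ∑ j, A i j = 1) (hB : ∀ i, ∑ j, B i j = 1) :
    ergCoeff (A * B) ≤ ergCoeff A * ergCoeff B := by
  refine ergCoeff_le_of_sum_abs_sub_le (sum_mul_apply_eq_one hA hB) fun i j => ?_
  have hrow : ∑ k, (A i - A j) k = 0 := by simp [sum_sub_distrib, hA]
  calc ∑ k, |(A * B) i k - (A * B) j k| = ∑ k, |((A i - A j) ᵥ* B) k| := by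
        simp only [Matrix.mul_apply_eq_vecMul, Matrix.sub_vecMul, Pi.sub_apply]
    _ ≤ 2 * ergCoeff B / 2 * ∑ k, |(A i - A j) k| :=
        sum_abs_vecMul_le (sum_abs_sub_le_two_mul_ergCoeff hB) hrow
    _ ≤ ergCoeff B * (2 * ergCoeff A) := by
        rw [mul_div_cancel_left₀ _ two_ne_zero]
        gcongr
        · exact ergCoeff_nonneg hB
        · exact sum_abs_sub_le_two_mul_ergCoeff hA i j
    _ = 2 * (ergCoeff A * ergCoeff B) := by ring

lemma sum_list_prod_apply_eq_one {L : List (Matrix (Fin n) (Fin n) ℝ)}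
    (hL : ∀ A ∈ L, ∀ i, ∑ j, A i j = 1) (i : Fin n) : ∑ j, L.prod i j = 1 := by
  induction L generalizing i with
  | nil => simp [Matrix.one_apply]
  | cons A L ih =>
    rw [List.prod_cons]
    exact sum_mul_apply_eq_one (hL A List.mem_cons_self)
      (ih fun B hB => hL B (List.mem_cons_of_mem A hB)) i

lemma ergCoeff_list_prod_le [Nonempty (Fin n)] {L : List (Matrix (Fin n) (Fin n) ℝ)}
    (hL : ∀ A ∈ L, ∀ i, ∑ j, A i j = 1) : ergCoeff L.prod ≤ (L.map ergCoeff).prod := by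
  induction L with
  | nil => exact ergCoeff_le_one fun i j => Matrix.zero_le_one_elem i j
  | cons A L ih =>
    have hA := hL A List.mem_cons_self
    have hL' : ∀ B ∈ L, ∀ i, ∑ j, B i j = 1 := fun B hB => hL B (List.mem_cons_of_mem A hB)
    rw [List.prod_cons, List.map_cons, List.prod_cons]
    exact (ergCoeff_mul_le hA (sum_list_prod_apply_eq_one hL')).trans <|
      mul_le_mul_of_nonneg_left (ih hL') (ergCoeff_nonneg hA)

end ergCoeff

lemma prod_le_exp_neg_sum {ι : Type*} {s : Finset ι} {x δ : ι → ℝ} (hx : ∀ i, 0 ≤ x i)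
    (hxδ : ∀ i, x i ≤ 1 - δ i) : ∏ i ∈ s, x i ≤ Real.exp (-∑ i ∈ s, δ i) :=
  calc ∏ i ∈ s, x i ≤ ∏ i ∈ s, Real.exp (-δ i) :=
        prod_le_prod (fun i _ => hx i) fun i _ => (hxδ i).trans (Real.one_sub_le_exp_neg _)
    _ = Real.exp (-∑ i ∈ s, δ i) := by rw [← sum_neg_distrib, Real.exp_sum]

lemma tendsto_prod_range_zero_of_le_one_sub {x δ : ℕ → ℝ} (hx : ∀ i, 0 ≤ x i)
    (hxδ : ∀ i, x i ≤ 1 - δ i) (hδ : Tendsto (fun m => ∑ i ∈ range m, δ i) atTop atTop) :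
    Tendsto (fun m => ∏ i ∈ range m, x i) atTop (𝓝 0) :=
  squeeze_zero (fun _ => prod_nonneg fun i _ => hx i) (fun _ => prod_le_exp_neg_sum hx hxδ)
    (Real.tendsto_exp_neg_atTop_nhds_zero.comp hδ)

theorem stmt12_general {n : ℕ} (hn : 1 ≤ n) (A : ℕ → Matrix (Fin n) (Fin n) ℝ)
    (hrowsum : ∀ t i, ∑ j, A t i j = 1)
    (δ : ℕ → ℝ)
    (hτ : ∀ i, ergCoeff (A i) ≤ 1 - δ i)
    (hdiv : Tendsto (fun m => ∑ i ∈ Finset.range m, δ i) atTop atTop) :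
    Tendsto (fun i => ergCoeff (((List.range (i + 1)).map A).reverse.prod))
      atTop (𝓝 0) := by
  have : Nonempty (Fin n) := ⟨⟨0, hn⟩⟩
  have hL : ∀ i, ∀ B ∈ ((List.range (i + 1)).map A).reverse, ∀ k, ∑ j, B k j = 1 := by
    simp only [List.mem_reverse, List.mem_map]
    rintro i B ⟨t, -, rfl⟩
    exact hrowsum t
  have hprod : Tendsto (fun m => ∏ t ∈ range m, ergCoeff (A t)) atTop (𝓝 0) :=
    tendsto_prod_range_zero_of_le_one_sub (fun t => ergCoeff_nonneg (hrowsum t)) hτ hdiv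
  refine squeeze_zero (fun i => ergCoeff_nonneg (sum_list_prod_apply_eq_one (hL i)))
    (fun i => ?_) (hprod.comp (tendsto_add_atTop_nat 1))
  calc _ ≤ (((List.range (i + 1)).map A).reverse.map ergCoeff).prod :=
        ergCoeff_list_prod_le (hL i)
    _ = ∏ t ∈ range (i + 1), ergCoeff (A t) := by
        rw [List.map_reverse, List.prod_reverse, List.map_map]
        rfl

/-- If `τ(A i) ≤ 1 - δ i` with `0 ≤ δ i ≤ 1` and `∑ δ i = ∞`, then the coefficients of
ergodicity of the backward products `A i ⋯ A 1 A 0` converge to zero. -/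
theorem stmt12 {n : ℕ} (hn : 1 ≤ n) (A : ℕ → Matrix (Fin n) (Fin n) ℝ)
    (hnonneg : ∀ t i j, 0 ≤ A t i j) (hrowsum : ∀ t i, ∑ j, A t i j = 1)
    (δ : ℕ → ℝ) (hδ0 : ∀ i, 0 ≤ δ i) (hδ1 : ∀ i, δ i ≤ 1)
    (hτ : ∀ i, ergCoeff (A i) ≤ 1 - δ i)
    (hdiv : Tendsto (fun m => ∑ i ∈ Finset.range m, δ i) atTop atTop) :
    Tendsto (fun i => ergCoeff (((List.range (i + 1)).map A).reverse.prod))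
      atTop (𝓝 0) :=
  stmt12_general hn A hrowsum δ hτ hdiv
end
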